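/- Let V = V₁ ⊕ ⋯ ⊕ V_t be a direct sum of K-vector spaces, for each j let m_j be an automorphism of V with (m_j - id)(V) ⊆ V_j, and let M = m_t ∘ ⋯ ∘ m₁. Then Im(M - id) ⊆ V₁ + ⋯ + V_t = V, and more usefully: a vector v is fixed by M if and only if for each k, the 'partial variation' p_k(m_k(w_k) - w_k) vanishes where w_k = (m_{k-1} ∘ ⋯ ∘ m₁)(v); equivalently, v is fixed by M if and only if m_k(w_k) = w_k for all k, which in turn forces w_k = v for all k. -/

import Mathlib

/-! Since `m j` moves only the `j`-th coordinate, the `k`-th coordinate of `compUpTo m n v`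
equals `v k` while `n ≤ k` and is frozen at `m k w_k k` once `k < n`, where
`w_k = compUpTo m k v`. Hence `compUpTo m t v - v` and the partial variation `m k w_k - w_k`
have the same `k`-th coordinate, and `m k` fixes `w_k` as soon as it fixes that coordinate. -/

def compUpTo {R : Type*} [Field R] {t : ℕ} {V : Fin t → Type*}
    [∀ i, AddCommGroup (V i)] [∀ i, Module R (V i)]
    (m : Fin t → ((∀ i, V i) ≃ₗ[R] (∀ i, V i))) : ℕ → ((∀ i, V i) ≃ₗ[R] (∀ i, V i))
  | 0 => LinearEquiv.refl R _
  | k + 1 => if h : k < t then (compUpTo m k).trans (m ⟨k, h⟩) else compUpTo m k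

namespace compUpTo

variable {K : Type*} [Field K] {t : ℕ} {V : Fin t → Type*}
    [∀ i, AddCommGroup (V i)] [∀ i, Module K (V i)]
    {m : Fin t → ((∀ i, V i) ≃ₗ[K] (∀ i, V i))}

theorem succ_apply {k : ℕ} (hk : k < t) (v : ∀ i, V i) :
    compUpTo m (k + 1) v = m ⟨k, hk⟩ (compUpTo m k v) := by
  simp [compUpTo, hk]

theorem succ_of_le {k : ℕ} (hk : t ≤ k) : compUpTo m (k + 1) = compUpTo m k := by
  simp [compUpTo, Nat.not_lt.mpr hk]

theorem eq_self_of_forall_fixed {v : ∀ i, V i}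
    (hfix : ∀ k : Fin t, m k (compUpTo m k v) = compUpTo m k v) (n : ℕ) :
    compUpTo m n v = v := by
  induction n with
  | zero => rfl
  | succ n ih =>
    rcases Nat.lt_or_ge n t with hn | hn
    · rw [succ_apply hn]
      exact (hfix ⟨n, hn⟩).trans ih
    · rw [succ_of_le hn, ih]

section SupportedMaps

variable (hm : ∀ j v i, i ≠ j → m j v i = v i)
include hm

theorem apply_of_le (v : ∀ i, V i) {n : ℕ} {j : Fin t} (hnj : n ≤ j) :
    compUpTo m n v j = v j := by
  induction n with
  | zero => rfl
  | succ n ih =>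
    have hn : n < t := by omega
    rw [succ_apply hn, hm _ _ _ (Fin.ne_of_val_ne (show (j : ℕ) ≠ n by omega)), ih (by omega)]

theorem apply_of_lt (v : ∀ i, V i) {n : ℕ} {j : Fin t} (hjn : (j : ℕ) < n) :
    compUpTo m n v j = m j (compUpTo m j v) j := by
  induction n with
  | zero => omega
  | succ n ih =>
    rcases Nat.lt_or_ge n t with hn | hn
    · rcases Nat.lt_succ_iff_lt_or_eq.mp hjn with hj | rfl
      · rw [succ_apply hn, hm _ _ _ (Fin.ne_of_val_ne (show (j : ℕ) ≠ n by omega)), ih hj]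
      · rw [succ_apply hn]
    · rw [succ_of_le hn, ih (by omega)]

theorem apply_eq_self_iff (j : Fin t) (w : ∀ i, V i) : m j w = w ↔ m j w j = w j :=
  ⟨fun h => by rw [h], fun h => funext fun i => by
    rcases eq_or_ne i j with rfl | hij
    · exact h
    · exact hm j w i hij⟩

theorem eq_self_iff_forall_apply (v : ∀ i, V i) :
    compUpTo m t v = v ↔ ∀ k : Fin t, m k (compUpTo m k v) k = compUpTo m k v k := by
  rw [funext_iff]
  refine forall_congr' fun k => ?_
  rw [apply_of_lt hm v k.isLt, apply_of_le hm v le_rfl]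

theorem eq_self_iff_forall_fixed (v : ∀ i, V i) :
    compUpTo m t v = v ↔ ∀ k : Fin t, m k (compUpTo m k v) = compUpTo m k v := by
  simp only [eq_self_iff_forall_apply hm, apply_eq_self_iff hm]

end SupportedMaps

end compUpTo

/-- v is fixed by M iff each partial variation vanishes, iff each m_k fixes
w_k = (m_{k-1} ∘ ⋯ ∘ m₁) v; and then w_k = v for all k. -/
theorem stmt15 {K : Type*} [Field K] {t : ℕ} {V : Fin t → Type*}
    [∀ i, AddCommGroup (V i)] [∀ i, Module K (V i)]
    (m : Fin t → ((∀ i, V i) ≃ₗ[K] (∀ i, V i)))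
    (hm : ∀ j : Fin t, ∀ v : ∀ i, V i, ∀ i, i ≠ j → (m j v - v) i = 0) :
    ∀ v : ∀ i, V i,
      (compUpTo m t v = v ↔
        ∀ k : Fin t, (m k (compUpTo m k.val v) - compUpTo m k.val v) k = 0) ∧
      (compUpTo m t v = v ↔
        ∀ k : Fin t, m k (compUpTo m k.val v) = compUpTo m k.val v) ∧
      (compUpTo m t v = v → ∀ k : Fin t, compUpTo m k.val v = v) := by
  have hm' : ∀ j v i, i ≠ j → m j v i = v i := fun j v i hij => sub_eq_zero.mp (hm j v i hij)
  intro v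
  refine ⟨?_, compUpTo.eq_self_iff_forall_fixed hm' v, fun h k => ?_⟩
  · simp only [compUpTo.eq_self_iff_forall_apply hm' v, Pi.sub_apply, sub_eq_zero]
  · exact compUpTo.eq_self_of_forall_fixed ((compUpTo.eq_self_iff_forall_fixed hm' v).mp h) k
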